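/- (Independences coincide) For all transitions t, u in CCSK: t and u are key independent if and only if t ⌣ u (core independent). -/
import Mathlib


namespace CCSKP

/-- Action labels: names, co-names and τ. -/
inductive Act : Type where
  | name (a : ℕ)
  | coname (a : ℕ)
  | tau
deriving DecidableEq

/-- Complement of an action label. -/
def Act.bar : Act → Act
  | .name a => .coname a
  | .coname a => .name a
  | .tau => .tau

/-- Directions Left / Right. -/
inductive Dir : Type where
  | L
  | R
deriving DecidableEq

/-- The opposite direction. -/
def Dir.op : Dir → Dir
  | .L => .R
  | .R => .L

/-- Selection according to a direction. -/
def Dir.sel {α : Type*} : Dir → α → α → α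
  | .L, x, _ => x
  | .R, _, y => y

/-- Keys. -/
abbrev Key := ℕ

/-- CCSK processes. -/
inductive Proc : Type where
  | nil
  | pre (α : Act) (X : Proc)
  | res (X : Proc) (a : ℕ)
  | sum (X Y : Proc)
  | par (X Y : Proc)
  | keyed (α : Act) (k : Key) (X : Proc)
deriving DecidableEq

/-- The set of keys occurring in a process. -/
def Proc.keys : Proc → Finset Key
  | .nil => ∅
  | .pre _ X => X.keys
  | .res X _ => X.keys
  | .sum X Y => X.keys ∪ Y.keys
  | .par X Y => X.keys ∪ Y.keys
  | .keyed _ k X => insert k X.keys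

/-- Standard processes: no keys. -/
def Proc.Std (X : Proc) : Prop := X.keys = ∅

/-- Proof keyed labels. -/
inductive PLab : Type where
  | act (α : Act) (k : Key)
  | par (d : Dir) (θ : PLab)
  | sum (d : Dir) (θ : PLab)
  | syn (θL θR : PLab)
deriving DecidableEq

/-- The action ℓ(θ) of a proof keyed label. -/
def PLab.lab : PLab → Act
  | .act α _ => α
  | .par _ θ => θ.lab
  | .sum _ θ => θ.lab
  | .syn _ _ => .tau

/-- The key of a proof keyed label. -/
def PLab.key : PLab → Key
  | .act _ k => k
  | .par _ θ => θ.key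
  | .sum _ θ => θ.key
  | .syn θL _ => θL.key

/-- θ is of the form υ α[k] (no synchronisation pair). -/
def PLab.IsPre : PLab → Prop
  | .act _ _ => True
  | .par _ θ => θ.IsPre
  | .sum _ θ => θ.IsPre
  | .syn _ _ => False

/-- Forward transitions of CCSKP. -/
inductive Fwd : Proc → PLab → Proc → Prop where
  | act {α : Act} {X : Proc} {k : Key} :
      X.keys = ∅ → Fwd (.pre α X) (.act α k) (.keyed α k X)
  | pre {X X' : Proc} {θ : PLab} {α : Act} {k : Key} :
      Fwd X θ X' → θ.key ≠ k → Fwd (.keyed α k X) θ (.keyed α k X')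
  | res {X X' : Proc} {θ : PLab} {a : ℕ} :
      Fwd X θ X' → θ.lab ≠ .name a → θ.lab ≠ .coname a →
      Fwd (.res X a) θ (.res X' a)
  | parL {X X' Y : Proc} {θ : PLab} :
      Fwd X θ X' → θ.key ∉ Y.keys → Fwd (.par X Y) (.par .L θ) (.par X' Y)
  | parR {X Y Y' : Proc} {θ : PLab} :
      Fwd Y θ Y' → θ.key ∉ X.keys → Fwd (.par X Y) (.par .R θ) (.par X Y')
  | syn {X X' Y Y' : Proc} {θ1 θ2 : PLab} :
      Fwd X θ1 X' → Fwd Y θ2 Y' → θ1.IsPre → θ2.IsPre → θ1.lab ≠ .tau →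
      θ2.lab = θ1.lab.bar → θ2.key = θ1.key →
      Fwd (.par X Y) (.syn θ1 θ2) (.par X' Y')
  | sumL {X X' Y : Proc} {θ : PLab} :
      Fwd X θ X' → Y.keys = ∅ → Fwd (.sum X Y) (.sum .L θ) (.sum X' Y)
  | sumR {X Y Y' : Proc} {θ : PLab} :
      Fwd Y θ Y' → X.keys = ∅ → Fwd (.sum X Y) (.sum .R θ) (.sum X Y')

/-- Backward transitions of CCSKP: the exactly symmetric rules. -/
inductive Bwd : Proc → PLab → Proc → Prop where
  | act {α : Act} {X : Proc} {k : Key} :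
      X.keys = ∅ → Bwd (.keyed α k X) (.act α k) (.pre α X)
  | pre {X' X : Proc} {θ : PLab} {α : Act} {k : Key} :
      Bwd X' θ X → θ.key ≠ k → Bwd (.keyed α k X') θ (.keyed α k X)
  | res {X' X : Proc} {θ : PLab} {a : ℕ} :
      Bwd X' θ X → θ.lab ≠ .name a → θ.lab ≠ .coname a →
      Bwd (.res X' a) θ (.res X a)
  | parL {X' X Y : Proc} {θ : PLab} :
      Bwd X' θ X → θ.key ∉ Y.keys → Bwd (.par X' Y) (.par .L θ) (.par X Y)
  | parR {X Y' Y : Proc} {θ : PLab} :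
      Bwd Y' θ Y → θ.key ∉ X.keys → Bwd (.par X Y') (.par .R θ) (.par X Y)
  | syn {X' X Y' Y : Proc} {θ1 θ2 : PLab} :
      Bwd X' θ1 X → Bwd Y' θ2 Y → θ1.IsPre → θ2.IsPre → θ1.lab ≠ .tau →
      θ2.lab = θ1.lab.bar → θ2.key = θ1.key →
      Bwd (.par X' Y') (.syn θ1 θ2) (.par X Y)
  | sumL {X' X Y : Proc} {θ : PLab} :
      Bwd X' θ X → Y.keys = ∅ → Bwd (.sum X' Y) (.sum .L θ) (.sum X Y)
  | sumR {X Y' Y : Proc} {θ : PLab} :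
      Bwd Y' θ Y → X.keys = ∅ → Bwd (.sum X Y') (.sum .R θ) (.sum X Y)

/-- A combined step: forward if `d = true`, backward if `d = false`. -/
def Step (X : Proc) (d : Bool) (θ : PLab) (Y : Proc) : Prop :=
  if d then Fwd X θ Y else Bwd X θ Y

/-- Transitions of CCSKP (forward or backward). -/
structure Tr : Type where
  src : Proc
  fwd? : Bool
  lbl : PLab
  tgt : Proc
deriving DecidableEq

/-- A transition is valid if it is derivable in the LTS. -/
def Tr.Valid (t : Tr) : Prop := Step t.src t.fwd? t.lbl t.tgt

/-- The reverse of a transition. -/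
def Tr.rev (t : Tr) : Tr := ⟨t.tgt, !t.fwd?, t.lbl, t.src⟩

/-- The key of a transition. -/
def Tr.key (t : Tr) : Key := t.lbl.key

/-- Existence of a path between two processes. -/
inductive Reach : Proc → Proc → Prop where
  | refl (X : Proc) : Reach X X
  | step {X Y Z : Proc} {d : Bool} {θ : PLab} :
      Step X d θ Y → Reach Y Z → Reach X Z

/-- t is connected to u: there is a path from the source of t to the target of u. -/
def Tr.ConnectedTo (t u : Tr) : Prop := Reach t.src u.tgt

/-- t and u are connected. -/
def Tr.Connected (t u : Tr) : Prop := t.ConnectedTo u ∨ u.ConnectedTo t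

/-- X cannot perform a backward transition. -/
def Rooted (X : Proc) : Prop := ∀ (θ : PLab) (Y : Proc), ¬ Bwd X θ Y

/-- Reachable processes: target of a rooted path from a standard origin. -/
def Reachable (X : Proc) : Prop := ∃ O : Proc, O.Std ∧ Rooted O ∧ Reach O X

/-- The connectivity relation ⌢ on proof keyed labels. -/
inductive Conn : PLab → PLab → Prop where
  | a1 {α : Act} {k : Key} {θ : PLab} : Conn (.act α k) θ
  | a2 {θ : PLab} {α : Act} {k : Key} :
      (∀ (β : Act) (k' : Key), θ ≠ .act β k') → Conn θ (.act α k)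
  | c1 {d : Dir} {θ θ' : PLab} : Conn θ θ' → Conn (.sum d θ) (.sum d θ')
  | c2 {d : Dir} {θ θ' : PLab} : Conn (.sum d θ) (.sum d.op θ')
  | p1 {d : Dir} {θ θ' : PLab} : Conn θ θ' → Conn (.par d θ) (.par d θ')
  | p2 {d : Dir} {θ θ' : PLab} : Conn (.par d θ) (.par d.op θ')
  | s1 {d : Dir} {θ θL θR : PLab} : Conn θ (d.sel θL θR) → Conn (.par d θ) (.syn θL θR)
  | s2 {d : Dir} {θ θL θR : PLab} : Conn (d.sel θL θR) θ → Conn (.syn θL θR) (.par d θ)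
  | s3 {θ1 θ2 θ1' θ2' : PLab} : Conn θ1 θ1' → Conn θ2 θ2' → Conn (.syn θ1 θ2) (.syn θ1' θ2')

/-- The dependence relation ⊙ on proof keyed labels. -/
inductive Dep : PLab → PLab → Prop where
  | a1 {α : Act} {k : Key} {θ : PLab} : Dep (.act α k) θ
  | a2 {θ : PLab} {α : Act} {k : Key} :
      (∀ (β : Act) (k' : Key), θ ≠ .act β k') → Dep θ (.act α k)
  | c1 {d : Dir} {θ θ' : PLab} : Dep θ θ' → Dep (.sum d θ) (.sum d θ')
  | c2 {d : Dir} {θ θ' : PLab} : Dep (.sum d θ) (.sum d.op θ')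
  | p1 {d : Dir} {θ θ' : PLab} : Dep θ θ' → Dep (.par d θ) (.par d θ')
  | p2k {d : Dir} {θ θ' : PLab} : θ.key = θ'.key → Dep (.par d θ) (.par d.op θ')
  | s1 {d : Dir} {θ θL θR : PLab} : Dep θ (d.sel θL θR) → Dep (.par d θ) (.syn θL θR)
  | s2 {d : Dir} {θ θL θR : PLab} : Dep (d.sel θL θR) θ → Dep (.syn θL θR) (.par d θ)
  | s3a {θ1 θ2 θ1' θ2' : PLab} : Dep θ1 θ1' → Conn θ2 θ2' → Dep (.syn θ1 θ2) (.syn θ1' θ2')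
  | s3b {θ1 θ2 θ1' θ2' : PLab} : Conn θ1 θ1' → Dep θ2 θ2' → Dep (.syn θ1 θ2) (.syn θ1' θ2')

/-- The independence relation ι on proof keyed labels. -/
inductive Ind : PLab → PLab → Prop where
  | c1 {d : Dir} {θ θ' : PLab} : Ind θ θ' → Ind (.sum d θ) (.sum d θ')
  | p1 {d : Dir} {θ θ' : PLab} : Ind θ θ' → Ind (.par d θ) (.par d θ')
  | p2k {d : Dir} {θ θ' : PLab} : θ.key ≠ θ'.key → Ind (.par d θ) (.par d.op θ')
  | s1 {d : Dir} {θ θL θR : PLab} : Ind θ (d.sel θL θR) → Ind (.par d θ) (.syn θL θR)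
  | s2 {d : Dir} {θ θL θR : PLab} : Ind (d.sel θL θR) θ → Ind (.syn θL θR) (.par d θ)
  | s3 {θ1 θ2 θ1' θ2' : PLab} : Ind θ1 θ1' → Ind θ2 θ2' → Ind (.syn θ1 θ2) (.syn θ1' θ2')

/-- Independence of transitions: connected transitions with independent labels. -/
def Tr.ind (t u : Tr) : Prop := t.Valid ∧ u.Valid ∧ t.Connected u ∧ Ind t.lbl u.lbl

/-- Dependence of transitions: connected transitions with dependent labels. -/
def Tr.dep (t u : Tr) : Prop := t.Valid ∧ u.Valid ∧ t.Connected u ∧ Dep t.lbl u.lbl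

end CCSKP

namespace CCSKP

/-- A commuting square of transitions: t, u coinitial; u', t' the opposite sides. -/
def Square (t u u' t' : Tr) : Prop :=
  t.Valid ∧ u.Valid ∧ u'.Valid ∧ t'.Valid ∧
  t.src = u.src ∧ u'.src = t.tgt ∧ t'.src = u.tgt ∧ u'.tgt = t'.tgt ∧
  u'.lbl = u.lbl ∧ u'.fwd? = u.fwd? ∧ t'.lbl = t.lbl ∧ t'.fwd? = t.fwd?

/-- Event equivalence: the smallest equivalence such that in a commuting square
with independent sides, `t ∼ t'` and `reverse t ∼ t'`. -/
inductive EvEq : Tr → Tr → Prop where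
  | refl (t : Tr) : EvEq t t
  | symm {t u : Tr} : EvEq t u → EvEq u t
  | trans {t u v : Tr} : EvEq t u → EvEq u v → EvEq t v
  | sq {t u u' t' : Tr} : Square t u u' t' → t.ind u → EvEq t t'
  | sqrev {t u u' t' : Tr} : Square t u u' t' → t.ind u → EvEq t.rev t'

/-- Paths between processes. -/
inductive Path : Proc → Proc → Type where
  | nil (X : Proc) : Path X X
  | cons {X Y Z : Proc} (t : Tr) (hv : t.Valid) (hs : t.src = X) (ht : t.tgt = Y)
      (r : Path Y Z) : Path X Z

open Classical in
/-- Signed number of occurrences in a path of the event represented by `e`. -/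
noncomputable def Path.count (e : Tr) : ∀ {X Y : Proc}, Path X Y → ℤ
  | _, _, .nil _ => 0
  | _, _, .cons t _ _ _ r =>
      (if EvEq t e then (1 : ℤ) else if EvEq t e.rev then (-1 : ℤ) else 0) + Path.count e r

/-- Membership of a transition in a path. -/
def Path.Mem (u : Tr) : ∀ {X Y : Proc}, Path X Y → Prop
  | _, _, .nil _ => False
  | _, _, .cons t _ _ _ r => u = t ∨ Path.Mem u r

/-- Length of a path. -/
def Path.length : ∀ {X Y : Proc}, Path X Y → ℕ
  | _, _, .nil _ => 0
  | _, _, .cons _ _ _ _ r => Path.length r + 1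

/-- `e` represents a forward event belonging to ev(X). -/
def InEv (X : Proc) (e : Tr) : Prop :=
  e.Valid ∧ e.fwd? = true ∧
  ∃ (O : Proc) (r : Path O X), Rooted O ∧ 0 < Path.count e r

/-- Causal ordering on (representatives of) forward events. -/
def CausLE (e e' : Tr) : Prop :=
  ∀ (O Z : Proc) (r : Path O Z), Rooted O → 0 < Path.count e' r → 0 < Path.count e r

/-- Strict causal ordering on (representatives of) forward events. -/
def EvLT (e e' : Tr) : Prop := CausLE e e' ∧ ¬ EvEq e e'

/-- Core independence on events. -/
def CoreInd (e e' : Tr) : Prop :=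
  ∃ t t' : Tr, EvEq t e ∧ EvEq t' e' ∧ t.src = t'.src ∧ t.ind t'

/-- Independence on events. -/
def EvInd (e e' : Tr) : Prop := ∃ t t' : Tr, EvEq t e ∧ EvEq t' e' ∧ t.ind t'

/-- Dependence on events. -/
def EvDep (e e' : Tr) : Prop :=
  ∃ t t' : Tr, EvEq t e ∧ EvEq t' e' ∧ t.Valid ∧ t'.Valid ∧ Dep t.lbl t'.lbl

/-- Connected events. -/
def EvConnected (e e' : Tr) : Prop :=
  ∃ t t' : Tr, EvEq t e ∧ EvEq t' e' ∧ t.Valid ∧ t'.Valid ∧ t.Connected t'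

/-- Composable events. -/
def EvComposable (e e' : Tr) : Prop :=
  ∃ t t' : Tr, EvEq t e ∧ EvEq t' e' ∧ t.Valid ∧ t'.Valid ∧ t.tgt = t'.src

/-- The forward version of a transition. -/
def Tr.fwdOf (t : Tr) : Tr := if t.fwd? then t else t.rev

/-- Event key equivalence on forward transitions: same key, and a path between the
targets avoiding that key. -/
def KeyEqF (t1 t2 : Tr) : Prop :=
  t1.key = t2.key ∧ ∃ r : Path t1.tgt t2.tgt, ∀ u : Tr, Path.Mem u r → u.key ≠ t1.key

/-- Event key equivalence on arbitrary transitions. -/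
def KeyEq (t1 t2 : Tr) : Prop := KeyEqF t1.fwdOf t2.fwdOf

/-- The generator ord(X) of the key ordering. -/
def ordRel : Proc → Key → Key → Prop
  | .nil, _, _ => False
  | .pre _ X, m, n => ordRel X m n
  | .res X _, m, n => ordRel X m n
  | .sum X Y, m, n => ordRel X m n ∨ ordRel Y m n
  | .par X Y, m, n => ordRel X m n ∨ ordRel Y m n
  | .keyed _ k X, m, n => ordRel X m n ∨ (m = k ∧ n ∈ X.keys)

/-- Key ordering ≤_X : reflexive transitive closure of ord(X). -/
def keyLE (X : Proc) : Key → Key → Prop := Relation.ReflTransGen (ordRel X)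

end CCSKP

namespace CCSKP

/-- CCSK forward transitions: erasures of CCSKP forward transitions. -/
def KFwd (X : Proc) (α : Act) (k : Key) (Y : Proc) : Prop :=
  ∃ θ : PLab, θ.lab = α ∧ θ.key = k ∧ Fwd X θ Y

/-- CCSK backward transitions: erasures of CCSKP backward transitions. -/
def KBwd (X : Proc) (α : Act) (k : Key) (Y : Proc) : Prop :=
  ∃ θ : PLab, θ.lab = α ∧ θ.key = k ∧ Bwd X θ Y

/-- A combined CCSK step. -/
def KStep (X : Proc) (d : Bool) (α : Act) (k : Key) (Y : Proc) : Prop :=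
  if d then KFwd X α k Y else KBwd X α k Y

/-- CCSK transitions. -/
structure KTr : Type where
  src : Proc
  fwd? : Bool
  act : Act
  key : Key
  tgt : Proc
deriving DecidableEq

def KTr.Valid (t : KTr) : Prop := KStep t.src t.fwd? t.act t.key t.tgt

def KTr.rev (t : KTr) : KTr := ⟨t.tgt, !t.fwd?, t.act, t.key, t.src⟩

def KTr.Connected (t u : KTr) : Prop := Reach t.src u.tgt ∨ Reach u.src t.tgt

/-- Independence of CCSK transitions: connected, and the proof keyed labels of the
corresponding (unique) CCSKP transitions are independent. -/
def KTr.ind (t u : KTr) : Prop :=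
  t.Valid ∧ u.Valid ∧ t.Connected u ∧
  ∃ θ1 θ2 : PLab,
    θ1.lab = t.act ∧ θ1.key = t.key ∧ Step t.src t.fwd? θ1 t.tgt ∧
    θ2.lab = u.act ∧ θ2.key = u.key ∧ Step u.src u.fwd? θ2 u.tgt ∧
    Ind θ1 θ2

/-- Directly key independent CCSK transitions: coinitial, different keys, and a
completing square with the same label-key pairs and directions. -/
def KTr.DKI (t u : KTr) : Prop :=
  t.Valid ∧ u.Valid ∧ t.src = u.src ∧ t.key ≠ u.key ∧
  ∃ S : Proc, KStep t.tgt u.fwd? u.act u.key S ∧ KStep u.tgt t.fwd? t.act t.key S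

/-- A commuting square of CCSK transitions. -/
def KSquare (t u u' t' : KTr) : Prop :=
  t.Valid ∧ u.Valid ∧ u'.Valid ∧ t'.Valid ∧
  t.src = u.src ∧ u'.src = t.tgt ∧ t'.src = u.tgt ∧ u'.tgt = t'.tgt ∧
  u'.act = u.act ∧ u'.key = u.key ∧ u'.fwd? = u.fwd? ∧
  t'.act = t.act ∧ t'.key = t.key ∧ t'.fwd? = t.fwd?

/-- Event equivalence on CCSK transitions. -/
inductive KEvEq : KTr → KTr → Prop where
  | refl (t : KTr) : KEvEq t t
  | symm {t u : KTr} : KEvEq t u → KEvEq u t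
  | trans {t u v : KTr} : KEvEq t u → KEvEq u v → KEvEq t v
  | sq {t u u' t' : KTr} : KSquare t u u' t' → t.ind u → KEvEq t t'
  | sqrev {t u u' t' : KTr} : KSquare t u u' t' → t.ind u → KEvEq t.rev t'

def KTr.fwdOf (t : KTr) : KTr := if t.fwd? then t else t.rev

/-- Event key equivalence on forward CCSK transitions. -/
def KKeyEqF (t1 t2 : KTr) : Prop :=
  t1.key = t2.key ∧ ∃ r : Path t1.tgt t2.tgt, ∀ u : Tr, Path.Mem u r → u.key ≠ t1.key

/-- Event key equivalence on arbitrary CCSK transitions. -/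
def KKeyEq (t1 t2 : KTr) : Prop := KKeyEqF t1.fwdOf t2.fwdOf

/-- Key independent CCSK transitions. -/
def KKeyInd (t u : KTr) : Prop :=
  t.Connected u ∧ ∃ t' u' : KTr, KKeyEq t t' ∧ KKeyEq u u' ∧ t'.DKI u'

/-- Core independence on CCSK transitions. -/
def KCoreInd (t u : KTr) : Prop :=
  ∃ t0 u0 : KTr, KEvEq t0 t ∧ KEvEq u0 u ∧ t0.src = u0.src ∧ t0.ind u0

end CCSKP
namespace CCSKP

theorem Fwd.to_bwd {X Y : Proc} {θ : PLab} (h : Fwd X θ Y) : Bwd Y θ X := by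
  induction h with
  | act h => exact .act h
  | pre _ h ih => exact .pre ih h
  | res _ h1 h2 ih => exact .res ih h1 h2
  | parL _ h ih => exact .parL ih h
  | parR _ h ih => exact .parR ih h
  | syn _ _ h1 h2 h3 h4 h5 ih1 ih2 => exact .syn ih1 ih2 h1 h2 h3 h4 h5
  | sumL _ h ih => exact .sumL ih h
  | sumR _ h ih => exact .sumR ih h

theorem Bwd.to_fwd {X Y : Proc} {θ : PLab} (h : Bwd X θ Y) : Fwd Y θ X := by
  induction h with
  | act h => exact .act h
  | pre _ h ih => exact .pre ih h
  | res _ h1 h2 ih => exact .res ih h1 h2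
  | parL _ h ih => exact .parL ih h
  | parR _ h ih => exact .parR ih h
  | syn _ _ h1 h2 h3 h4 h5 ih1 ih2 => exact .syn ih1 ih2 h1 h2 h3 h4 h5
  | sumL _ h ih => exact .sumL ih h
  | sumR _ h ih => exact .sumR ih h

theorem bwd_iff {X Y : Proc} {θ : PLab} : Bwd X θ Y ↔ Fwd Y θ X :=
  ⟨Bwd.to_fwd, Fwd.to_bwd⟩

theorem Fwd.key_notMem {X Y : Proc} {θ : PLab} (h : Fwd X θ Y) : θ.key ∉ X.keys := by
  induction h with
  | act h => simp [Proc.keys, h]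
  | pre _ h ih => simp [Proc.keys, PLab.key]; exact ⟨h, ih⟩
  | res _ _ _ ih => exact ih
  | parL _ h ih => simp [Proc.keys, PLab.key]; exact ⟨ih, h⟩
  | parR _ h ih => simp [Proc.keys, PLab.key]; exact ⟨h, ih⟩
  | syn _ _ _ _ _ _ hk ih1 ih2 =>
      simp [Proc.keys, PLab.key]; exact ⟨ih1, by rw [← hk]; exact ih2⟩
  | sumL _ h ih => simp [Proc.keys, PLab.key]; exact ⟨ih, by simp [h]⟩
  | sumR _ h ih => simp [Proc.keys, PLab.key]; exact ⟨by simp [h], ih⟩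

theorem Fwd.keys_eq {X Y : Proc} {θ : PLab} (h : Fwd X θ Y) :
    Y.keys = insert θ.key X.keys := by
  induction h with
  | act h => simp [Proc.keys, PLab.key]
  | pre _ h ih =>
      simp only [Proc.keys, PLab.key, ih]
      rw [Finset.insert_comm]
  | res _ _ _ ih => exact ih
  | parL _ h ih => simp [Proc.keys, PLab.key, ih, Finset.insert_union]
  | parR _ h ih => simp [Proc.keys, PLab.key, ih, Finset.union_insert]
  | syn _ _ _ _ _ _ hk ih1 ih2 =>
      simp [Proc.keys, PLab.key, ih1, ih2, hk, Finset.insert_union, Finset.union_insert]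
  | sumL _ h ih => simp [Proc.keys, PLab.key, ih, Finset.insert_union]
  | sumR _ h ih => simp [Proc.keys, PLab.key, ih, Finset.union_insert]

theorem Fwd.key_mem_tgt {X Y : Proc} {θ : PLab} (h : Fwd X θ Y) : θ.key ∈ Y.keys := by
  rw [h.keys_eq]; exact Finset.mem_insert_self _ _

/-- All syn sublabels have matching keys. -/
def PLab.SynOK : PLab → Prop
  | .act _ _ => True
  | .par _ θ => θ.SynOK
  | .sum _ θ => θ.SynOK
  | .syn θ1 θ2 => θ2.key = θ1.key ∧ θ1.SynOK ∧ θ2.SynOK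

theorem Fwd.synOK {X Y : Proc} {θ : PLab} (h : Fwd X θ Y) : θ.SynOK := by
  induction h with
  | act _ => trivial
  | pre _ _ ih => exact ih
  | res _ _ _ ih => exact ih
  | parL _ _ ih => exact ih
  | parR _ _ ih => exact ih
  | syn _ _ _ _ _ _ hk ih1 ih2 => exact ⟨hk, ih1, ih2⟩
  | sumL _ _ ih => exact ih
  | sumR _ _ ih => exact ih

theorem Dir.op_op (d : Dir) : d.op.op = d := by cases d <;> rfl

theorem Ind.symm {θ1 θ2 : PLab} (h : Ind θ1 θ2) : Ind θ2 θ1 := by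
  induction h with
  | c1 _ ih => exact .c1 ih
  | p1 _ ih => exact .p1 ih
  | p2k h =>
      rename_i d θ θ'
      have := Ind.p2k (d := d.op) (θ := θ') (θ' := θ) (Ne.symm h)
      rwa [Dir.op_op] at this
  | s1 _ ih => exact .s2 ih
  | s2 _ ih => exact .s1 ih
  | s3 _ _ ih1 ih2 => exact .s3 ih1 ih2

theorem keys_ne {θ1 θ2 : PLab} (h : Ind θ1 θ2) (h1 : θ1.SynOK) (h2 : θ2.SynOK) :
    θ1.key ≠ θ2.key := by
  induction h with
  | c1 _ ih => exact ih h1 h2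
  | p1 _ ih => exact ih h1 h2
  | p2k h => exact h
  | s1 h ih =>
      rename_i d θ θL θR
      cases d with
      | L => exact ih h1 h2.2.1
      | R =>
          have := ih h1 h2.2.2
          simpa [Dir.sel, PLab.key, h2.1] using this
  | s2 h ih =>
      rename_i d θ θL θR
      cases d with
      | L => exact ih h1.2.1 h2
      | R =>
          have := ih h1.2.2 h2
          simpa [Dir.sel, PLab.key, h1.1] using this
  | s3 _ _ ih1 ih2 => exact ih1 h1.2.1 h2.2.1

end CCSKP
namespace CCSKP

set_option maxHeartbeats 1000000 in
/-- Cofinal determinism: forward transitions into the same process with equal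
keys coincide. -/
theorem cofinal_det {Y Z X : Proc} {θ θ' : PLab} (h1 : Fwd Y θ X) (h2 : Fwd Z θ' X)
    (hk : θ.key = θ'.key) : θ = θ' ∧ Y = Z := by
  induction h1 generalizing Z θ' with
  | act hstd =>
      cases h2 with
      | act _ => exact ⟨rfl, rfl⟩
      | pre h _ =>
          exact absurd h.key_mem_tgt (by simp [hstd])
  | pre h1' hne ih =>
      cases h2 with
      | act hstd => exact absurd h1'.key_mem_tgt (by simp [hstd])
      | pre h2' hne' =>
          obtain ⟨hθ, hY⟩ := ih h2' hk
          exact ⟨hθ, by rw [hY]⟩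
  | res h1' hn1 hn2 ih =>
      cases h2 with
      | res h2' _ _ =>
          obtain ⟨hθ, hY⟩ := ih h2' hk
          exact ⟨hθ, by rw [hY]⟩
  | parL h1' hB ih =>
      simp only [PLab.key] at hk
      cases h2 with
      | parL h2' _ =>
          obtain ⟨hθ, hY⟩ := ih h2' (by simpa [PLab.key] using hk)
          exact ⟨by rw [hθ], by rw [hY]⟩
      | parR h2' _ =>
          simp only [PLab.key] at hk
          exact absurd (hk ▸ h2'.key_mem_tgt) hB
      | syn h2a h2b _ _ _ _ hky =>
          simp only [PLab.key] at hk
          have := h2b.key_mem_tgt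
          rw [hky, ← hk] at this
          exact absurd this hB
  | parR h1' hA ih =>
      simp only [PLab.key] at hk
      cases h2 with
      | parR h2' _ =>
          obtain ⟨hθ, hY⟩ := ih h2' (by simpa [PLab.key] using hk)
          exact ⟨by rw [hθ], by rw [hY]⟩
      | parL h2' _ =>
          simp only [PLab.key] at hk
          exact absurd (hk ▸ h2'.key_mem_tgt) hA
      | syn h2a h2b _ _ _ _ hky =>
          simp only [PLab.key] at hk
          have : _ ∈ _ := h2a.key_mem_tgt
          rw [← hk] at this
          exact absurd this hA
  | syn h1a h1b hp1 hp2 hnt hbar hky ih1 ih2 =>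
      simp only [PLab.key] at hk
      cases h2 with
      | parL h2' hside =>
          simp only [PLab.key] at hk
          have : _ ∈ _ := h1b.key_mem_tgt
          rw [hky, hk] at this
          exact absurd this hside
      | parR h2' hside =>
          simp only [PLab.key] at hk
          have : _ ∈ _ := h1a.key_mem_tgt
          rw [hk] at this
          exact absurd this hside
      | syn h2a h2b _ _ _ _ hky' =>
          simp only [PLab.key] at hk
          obtain ⟨hθ1, hY1⟩ := ih1 h2a hk
          obtain ⟨hθ2, hY2⟩ := ih2 h2b (by rw [hky, hky']; exact hk)
          exact ⟨by rw [hθ1, hθ2], by rw [hY1, hY2]⟩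
  | sumL h1' hstd ih =>
      cases h2 with
      | sumL h2' _ =>
          obtain ⟨hθ, hY⟩ := ih h2' (by simpa [PLab.key] using hk)
          exact ⟨by rw [hθ], by rw [hY]⟩
      | sumR h2' hstd' =>
          exact absurd h1'.key_mem_tgt (by simp [hstd'])
  | sumR h1' hstd ih =>
      cases h2 with
      | sumR h2' _ =>
          obtain ⟨hθ, hY⟩ := ih h2' (by simpa [PLab.key] using hk)
          exact ⟨by rw [hθ], by rw [hY]⟩
      | sumL h2' hstd' =>
          exact absurd h2'.key_mem_tgt (by simp [hstd])

end CCSKP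
namespace CCSKP

set_option maxHeartbeats 1000000 in
/-- Cofinal forward transitions with different keys commute backwards, and their
labels are independent (BTI). -/
theorem bti {Y Z X : Proc} {θ θ' : PLab} (h1 : Fwd Y θ X) (h2 : Fwd Z θ' X)
    (hk : θ.key ≠ θ'.key) : ∃ W, Fwd W θ' Y ∧ Fwd W θ Z ∧ Ind θ θ' := by
  induction h1 generalizing Z θ' with
  | act hstd =>
      cases h2 with
      | act _ => exact absurd (rfl : (PLab.act _ _).key = (PLab.act _ _).key) hk
      | pre h _ => exact absurd h.key_mem_tgt (by simp [hstd])
  | pre h1' hne ih =>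
      cases h2 with
      | act hstd => exact absurd h1'.key_mem_tgt (by simp [hstd])
      | pre h2' hne' =>
          obtain ⟨W0, ha, hb, hi⟩ := ih h2' hk
          exact ⟨.keyed _ _ W0, .pre ha hne', .pre hb hne, hi⟩
  | res h1' hn1 hn2 ih =>
      cases h2 with
      | res h2' hn1' hn2' =>
          obtain ⟨W0, ha, hb, hi⟩ := ih h2' hk
          exact ⟨.res W0 _, .res ha hn1' hn2', .res hb hn1 hn2, hi⟩
  | parL h1' hB ih =>
      simp only [PLab.key] at hk
      cases h2 with
      | parL h2' hB' =>
          obtain ⟨WA, ha, hb, hi⟩ := ih h2' (by simpa [PLab.key] using hk)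
          exact ⟨.par WA _, .parL ha hB', .parL hb hB, .p1 hi⟩
      | parR h2' hA' =>
          simp only [PLab.key] at hk
          refine ⟨.par _ _, .parR h2' ?_, .parL h1' ?_, Ind.p2k (d := .L) hk⟩
          · exact fun m => hA' (h1'.keys_eq ▸ Finset.mem_insert_of_mem m)
          · exact fun m => hB (h2'.keys_eq ▸ Finset.mem_insert_of_mem m)
      | syn h2a h2b hp1' hp2' hnt' hbar' hky' =>
          simp only [PLab.key] at hk
          obtain ⟨WA, ha, hb, hi⟩ := ih h2a hk
          refine ⟨.par WA _, .syn ha h2b hp1' hp2' hnt' hbar' hky', .parL hb ?_, Ind.s1 (d := .L) hi⟩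
          · exact fun m => hB (h2b.keys_eq ▸ Finset.mem_insert_of_mem m)
  | parR h1' hA ih =>
      simp only [PLab.key] at hk
      cases h2 with
      | parR h2' hA' =>
          obtain ⟨WB, ha, hb, hi⟩ := ih h2' (by simpa [PLab.key] using hk)
          exact ⟨.par _ WB, .parR ha hA', .parR hb hA, .p1 hi⟩
      | parL h2' hB' =>
          simp only [PLab.key] at hk
          refine ⟨.par _ _, .parL h2' ?_, .parR h1' ?_, Ind.p2k (d := .R) hk⟩
          · exact fun m => hB' (h1'.keys_eq ▸ Finset.mem_insert_of_mem m)
          · exact fun m => hA (h2'.keys_eq ▸ Finset.mem_insert_of_mem m)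
      | syn h2a h2b hp1' hp2' hnt' hbar' hky' =>
          simp only [PLab.key] at hk
          obtain ⟨WB, ha, hb, hi⟩ := ih h2b (by rw [hky']; exact hk)
          refine ⟨.par _ WB, .syn h2a ha hp1' hp2' hnt' hbar' hky', .parR hb ?_, Ind.s1 (d := .R) hi⟩
          · exact fun m => hA (h2a.keys_eq ▸ Finset.mem_insert_of_mem m)
  | syn h1a h1b hp1 hp2 hnt hbar hky ih1 ih2 =>
      simp only [PLab.key] at hk
      cases h2 with
      | parL h2' hside =>
          simp only [PLab.key] at hk
          obtain ⟨WA, ha, hb, hi⟩ := ih1 h2' hk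
          refine ⟨.par WA _, .parL ha ?_, .syn hb h1b hp1 hp2 hnt hbar hky, Ind.s2 (d := .L) hi⟩
          · exact fun m => hside (h1b.keys_eq ▸ Finset.mem_insert_of_mem m)
      | parR h2' hside =>
          simp only [PLab.key] at hk
          obtain ⟨WB, ha, hb, hi⟩ := ih2 h2' (by rw [hky]; exact hk)
          refine ⟨.par _ WB, .parR ha ?_, .syn h1a hb hp1 hp2 hnt hbar hky, Ind.s2 (d := .R) hi⟩
          · exact fun m => hside (h1a.keys_eq ▸ Finset.mem_insert_of_mem m)
      | syn h2a h2b hp1' hp2' hnt' hbar' hky' =>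
          simp only [PLab.key] at hk
          obtain ⟨WA, ha1, hb1, hi1⟩ := ih1 h2a hk
          obtain ⟨WB, ha2, hb2, hi2⟩ := ih2 h2b (by rw [hky, hky']; exact hk)
          exact ⟨.par WA WB, .syn ha1 ha2 hp1' hp2' hnt' hbar' hky',
            .syn hb1 hb2 hp1 hp2 hnt hbar hky, .s3 hi1 hi2⟩
  | sumL h1' hstd ih =>
      cases h2 with
      | sumL h2' _ =>
          obtain ⟨WA, ha, hb, hi⟩ := ih h2' (by simpa [PLab.key] using hk)
          exact ⟨.sum WA _, .sumL ha hstd, .sumL hb hstd, .c1 hi⟩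
      | sumR h2' hstd' =>
          exact absurd h1'.key_mem_tgt (by simp [hstd'])
  | sumR h1' hstd ih =>
      cases h2 with
      | sumR h2' _ =>
          obtain ⟨WB, ha, hb, hi⟩ := ih h2' (by simpa [PLab.key] using hk)
          exact ⟨.sum _ WB, .sumR ha hstd, .sumR hb hstd, .c1 hi⟩
      | sumL h2' hstd' =>
          exact absurd h2'.key_mem_tgt (by simp [hstd])

end CCSKP
namespace CCSKP

set_option maxHeartbeats 1000000 in
/-- Square property, forward-forward case. -/
theorem sp_ff {X : Proc} {θ1 : PLab} {Y : Proc} (h1 : Fwd X θ1 Y) :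
    ∀ {θ2 : PLab} {Z : Proc}, Ind θ1 θ2 → Fwd X θ2 Z →
      ∃ W, Fwd Y θ2 W ∧ Fwd Z θ1 W := by
  induction h1 with
  | act hstd => intro θ2 Z hI h2; cases hI
  | pre h1' hne ih =>
      intro θ2 Z hI h2
      cases h2 with
      | pre h2' hne' =>
          obtain ⟨w, ha, hb⟩ := ih hI h2'
          exact ⟨.keyed _ _ w, .pre ha hne', .pre hb hne⟩
  | res h1' hn1 hn2 ih =>
      intro θ2 Z hI h2
      cases h2 with
      | res h2' hn1' hn2' =>
          obtain ⟨w, ha, hb⟩ := ih hI h2'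
          exact ⟨.res w _, .res ha hn1' hn2', .res hb hn1 hn2⟩
  | parL h1' hB ih =>
      intro θ2 Z hI h2
      cases hI with
      | p1 hI' =>
          cases h2 with
          | parL h2' hB' =>
              obtain ⟨w, ha, hb⟩ := ih hI' h2'
              exact ⟨.par w _, .parL ha hB', .parL hb hB⟩
      | p2k hk =>
          cases h2 with
          | parR h2' hA' =>
              refine ⟨.par _ _, .parR h2' ?_, .parL h1' ?_⟩
              · rw [h1'.keys_eq]
                simp only [Finset.mem_insert, not_or]
                exact ⟨Ne.symm hk, hA'⟩
              · rw [h2'.keys_eq]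
                simp only [Finset.mem_insert, not_or]
                exact ⟨hk, hB⟩
      | s1 hI' =>
          cases h2 with
          | syn h2a h2b hp1 hp2 hnt hbar hky =>
              obtain ⟨w, ha, hb⟩ := ih hI' h2a
              refine ⟨.par w _, .syn ha h2b hp1 hp2 hnt hbar hky, .parL hb ?_⟩
              rw [h2b.keys_eq]
              simp only [Finset.mem_insert, not_or]
              exact ⟨by rw [hky]; exact keys_ne hI' h1'.synOK h2a.synOK, hB⟩
  | parR h1' hA ih =>
      intro θ2 Z hI h2
      cases hI with
      | p1 hI' =>
          cases h2 with
          | parR h2' hA' =>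
              obtain ⟨w, ha, hb⟩ := ih hI' h2'
              exact ⟨.par _ w, .parR ha hA', .parR hb hA⟩
      | p2k hk =>
          cases h2 with
          | parL h2' hB' =>
              refine ⟨.par _ _, .parL h2' ?_, .parR h1' ?_⟩
              · rw [h1'.keys_eq]
                simp only [Finset.mem_insert, not_or]
                exact ⟨Ne.symm hk, hB'⟩
              · rw [h2'.keys_eq]
                simp only [Finset.mem_insert, not_or]
                exact ⟨hk, hA⟩
      | s1 hI' =>
          cases h2 with
          | syn h2a h2b hp1 hp2 hnt hbar hky =>
              obtain ⟨w, ha, hb⟩ := ih hI' h2b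
              refine ⟨.par _ w, .syn h2a ha hp1 hp2 hnt hbar hky, .parR hb ?_⟩
              rw [h2a.keys_eq]
              simp only [Finset.mem_insert, not_or]
              refine ⟨fun e => keys_ne hI' h1'.synOK h2b.synOK (e.trans hky.symm), hA⟩
  | syn h1a h1b hp1 hp2 hnt hbar hky ih1 ih2 =>
      intro θ2 Z hI h2
      cases hI with
      | s2 hI' =>
          rename_i d θ'
          cases d with
          | L =>
              cases h2 with
              | parL h2' hB' =>
                  obtain ⟨w, ha, hb⟩ := ih1 hI' h2'
                  refine ⟨.par w _, .parL ha ?_, .syn hb h1b hp1 hp2 hnt hbar hky⟩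
                  rw [h1b.keys_eq]
                  simp only [Finset.mem_insert, not_or]
                  exact ⟨fun e => keys_ne hI' h1a.synOK h2'.synOK (e.trans hky).symm, hB'⟩
          | R =>
              cases h2 with
              | parR h2' hA' =>
                  obtain ⟨w, ha, hb⟩ := ih2 hI' h2'
                  refine ⟨.par _ w, .parR ha ?_, .syn h1a hb hp1 hp2 hnt hbar hky⟩
                  rw [h1a.keys_eq]
                  simp only [Finset.mem_insert, not_or]
                  exact ⟨fun e => keys_ne hI' h1b.synOK h2'.synOK (hky.trans e.symm), hA'⟩
      | s3 hIa hIb =>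
          cases h2 with
          | syn h2a h2b hp1' hp2' hnt' hbar' hky' =>
              obtain ⟨wa, ha1, hb1⟩ := ih1 hIa h2a
              obtain ⟨wb, ha2, hb2⟩ := ih2 hIb h2b
              exact ⟨.par wa wb, .syn ha1 ha2 hp1' hp2' hnt' hbar' hky',
                .syn hb1 hb2 hp1 hp2 hnt hbar hky⟩
  | sumL h1' hstd ih =>
      intro θ2 Z hI h2
      cases hI with
      | c1 hI' =>
          cases h2 with
          | sumL h2' _ =>
              obtain ⟨w, ha, hb⟩ := ih hI' h2'
              exact ⟨.sum w _, .sumL ha hstd, .sumL hb hstd⟩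
  | sumR h1' hstd ih =>
      intro θ2 Z hI h2
      cases hI with
      | c1 hI' =>
          cases h2 with
          | sumR h2' _ =>
              obtain ⟨w, ha, hb⟩ := ih hI' h2'
              exact ⟨.sum _ w, .sumR ha hstd, .sumR hb hstd⟩

end CCSKP
namespace CCSKP

set_option maxHeartbeats 1000000 in
/-- Square property, forward-backward case: `t : X → Y` forward, `u : X → Z`
backward (given as `Fwd Z θ2 X`), independent labels. -/
theorem sp_fb {X : Proc} {θ1 : PLab} {Y : Proc} (h1 : Fwd X θ1 Y) :
    ∀ {θ2 : PLab} {Z : Proc}, Ind θ1 θ2 → Fwd Z θ2 X →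
      ∃ W, Fwd W θ2 Y ∧ Fwd Z θ1 W := by
  induction h1 with
  | act hstd => intro θ2 Z hI h2; cases hI
  | pre h1' hne ih =>
      intro θ2 Z hI h2
      cases h2 with
      | act hstd' => cases hI
      | pre h2' hne' =>
          obtain ⟨w, ha, hb⟩ := ih hI h2'
          exact ⟨.keyed _ _ w, .pre ha hne', .pre hb hne⟩
  | res h1' hn1 hn2 ih =>
      intro θ2 Z hI h2
      cases h2 with
      | res h2' hn1' hn2' =>
          obtain ⟨w, ha, hb⟩ := ih hI h2'
          exact ⟨.res w _, .res ha hn1' hn2', .res hb hn1 hn2⟩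
  | parL h1' hB ih =>
      intro θ2 Z hI h2
      cases hI with
      | p1 hI' =>
          cases h2 with
          | parL h2' hB' =>
              obtain ⟨w, ha, hb⟩ := ih hI' h2'
              exact ⟨.par w _, .parL ha hB', .parL hb hB⟩
      | p2k hk =>
          cases h2 with
          | parR h2' hA' =>
              refine ⟨.par _ _, .parR h2' ?_, .parL h1' ?_⟩
              · rw [h1'.keys_eq]
                simp only [Finset.mem_insert, not_or]
                exact ⟨Ne.symm hk, hA'⟩
              · exact fun m => hB (h2'.keys_eq ▸ Finset.mem_insert_of_mem m)
      | s1 hI' =>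
          cases h2 with
          | syn h2a h2b hp1 hp2 hnt hbar hky =>
              obtain ⟨w, ha, hb⟩ := ih hI' h2a
              refine ⟨.par w _, .syn ha h2b hp1 hp2 hnt hbar hky, .parL hb ?_⟩
              exact fun m => hB (h2b.keys_eq ▸ Finset.mem_insert_of_mem m)
  | parR h1' hA ih =>
      intro θ2 Z hI h2
      cases hI with
      | p1 hI' =>
          cases h2 with
          | parR h2' hA' =>
              obtain ⟨w, ha, hb⟩ := ih hI' h2'
              exact ⟨.par _ w, .parR ha hA', .parR hb hA⟩
      | p2k hk =>
          cases h2 with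
          | parL h2' hB' =>
              refine ⟨.par _ _, .parL h2' ?_, .parR h1' ?_⟩
              · rw [h1'.keys_eq]
                simp only [Finset.mem_insert, not_or]
                exact ⟨Ne.symm hk, hB'⟩
              · exact fun m => hA (h2'.keys_eq ▸ Finset.mem_insert_of_mem m)
      | s1 hI' =>
          cases h2 with
          | syn h2a h2b hp1 hp2 hnt hbar hky =>
              obtain ⟨w, ha, hb⟩ := ih hI' h2b
              refine ⟨.par _ w, .syn h2a ha hp1 hp2 hnt hbar hky, .parR hb ?_⟩
              exact fun m => hA (h2a.keys_eq ▸ Finset.mem_insert_of_mem m)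
  | syn h1a h1b hp1 hp2 hnt hbar hky ih1 ih2 =>
      intro θ2 Z hI h2
      cases hI with
      | s2 hI' =>
          rename_i d θ'
          cases d with
          | L =>
              cases h2 with
              | parL h2' hB' =>
                  obtain ⟨w, ha, hb⟩ := ih1 hI' h2'
                  refine ⟨.par w _, .parL ha ?_, .syn hb h1b hp1 hp2 hnt hbar hky⟩
                  rw [h1b.keys_eq]
                  simp only [Finset.mem_insert, not_or]
                  exact ⟨fun e => keys_ne hI' h1a.synOK h2'.synOK (e.trans hky).symm, hB'⟩
          | R =>
              cases h2 with
              | parR h2' hA' =>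
                  obtain ⟨w, ha, hb⟩ := ih2 hI' h2'
                  refine ⟨.par _ w, .parR ha ?_, .syn h1a hb hp1 hp2 hnt hbar hky⟩
                  rw [h1a.keys_eq]
                  simp only [Finset.mem_insert, not_or]
                  exact ⟨fun e => keys_ne hI' h1b.synOK h2'.synOK (hky.trans e.symm), hA'⟩
      | s3 hIa hIb =>
          cases h2 with
          | syn h2a h2b hp1' hp2' hnt' hbar' hky' =>
              obtain ⟨wa, ha1, hb1⟩ := ih1 hIa h2a
              obtain ⟨wb, ha2, hb2⟩ := ih2 hIb h2b
              exact ⟨.par wa wb, .syn ha1 ha2 hp1' hp2' hnt' hbar' hky',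
                .syn hb1 hb2 hp1 hp2 hnt hbar hky⟩
  | sumL h1' hstd ih =>
      intro θ2 Z hI h2
      cases hI with
      | c1 hI' =>
          cases h2 with
          | sumL h2' _ =>
              obtain ⟨w, ha, hb⟩ := ih hI' h2'
              exact ⟨.sum w _, .sumL ha hstd, .sumL hb hstd⟩
  | sumR h1' hstd ih =>
      intro θ2 Z hI h2
      cases hI with
      | c1 hI' =>
          cases h2 with
          | sumR h2' _ =>
              obtain ⟨w, ha, hb⟩ := ih hI' h2'
              exact ⟨.sum _ w, .sumR ha hstd, .sumR hb hstd⟩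

end CCSKP
namespace CCSKP

theorem step_rev {X Y : Proc} {d : Bool} {θ : PLab} (h : Step X d θ Y) :
    Step Y (!d) θ X := by
  cases d with
  | false => exact (show Bwd X θ Y from h).to_fwd
  | true => exact (show Fwd X θ Y from h).to_bwd

theorem Reach.trans' {X Y Z : Proc} (h1 : Reach X Y) (h2 : Reach Y Z) : Reach X Z := by
  induction h1 with
  | refl _ => exact h2
  | step hs _ ih => exact .step hs (ih h2)

theorem Reach.single {X Y : Proc} {d : Bool} {θ : PLab} (h : Step X d θ Y) : Reach X Y :=
  .step h (.refl _)

theorem Reach.symm' {X Y : Proc} (h : Reach X Y) : Reach Y X := by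
  induction h with
  | refl _ => exact .refl _
  | step hs _ ih => exact ih.trans' (Reach.single (step_rev hs))

theorem reach_of_path {X Y : Proc} (p : Path X Y) : Reach X Y := by
  induction p with
  | nil _ => exact .refl _
  | cons t hv hs ht r ih =>
      subst hs; subst ht
      exact .step hv ih

theorem kstep_iff {X Y : Proc} {d : Bool} {a : Act} {k : Key} :
    KStep X d a k Y ↔ ∃ θ : PLab, θ.lab = a ∧ θ.key = k ∧ Step X d θ Y := by
  cases d <;> rfl

/-- Backward KTr with the data of a proof label. -/
def mkB (X : Proc) (θ : PLab) (Y : Proc) : KTr := ⟨X, false, θ.lab, θ.key, Y⟩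

/-- Forward KTr with the data of a proof label. -/
def mkF (X : Proc) (θ : PLab) (Y : Proc) : KTr := ⟨X, true, θ.lab, θ.key, Y⟩

theorem mkB_valid {X Y : Proc} {θ : PLab} (h : Fwd Y θ X) : (mkB X θ Y).Valid :=
  ⟨θ, rfl, rfl, h.to_bwd⟩

theorem mkF_valid {X Y : Proc} {θ : PLab} (h : Fwd X θ Y) : (mkF X θ Y).Valid :=
  ⟨θ, rfl, rfl, h⟩

theorem KTr.rev_rev (t : KTr) : t.rev.rev = t := by
  cases t; simp [KTr.rev]

theorem fwdOf_key (t : KTr) : t.fwdOf.key = t.key := by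
  unfold KTr.fwdOf; split <;> rfl

theorem fwdOf_fwd (t : KTr) : t.fwdOf.fwd? = true := by
  unfold KTr.fwdOf
  split
  · assumption
  · rename_i h; simp [KTr.rev, Bool.not_eq_true' ] at *; simp [h]

theorem fwdOf_rev (t : KTr) : t.rev.fwdOf = t.fwdOf := by
  cases t with
  | mk s f a k g => cases f <;> simp [KTr.fwdOf, KTr.rev]

theorem KTr.valid_rev {t : KTr} (h : t.Valid) : t.rev.Valid := by
  obtain ⟨θ, hl, hk, hs⟩ := kstep_iff.1 h
  exact kstep_iff.2 ⟨θ, hl, hk, step_rev hs⟩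

theorem fwdOf_valid {t : KTr} (h : t.Valid) : t.fwdOf.Valid := by
  unfold KTr.fwdOf; split
  · exact h
  · exact KTr.valid_rev h

/-- Both transitions of a pair and their reverses are all event equivalent. -/
def AllCls (a b : KTr) : Prop := KEvEq a b ∧ KEvEq a a.rev ∧ KEvEq b b.rev

/-- Equal, or all in one equivalence class together with reverses. -/
def CRel (a b : KTr) : Prop := a = b ∨ AllCls a b

theorem CRel.refl (a : KTr) : CRel a a := Or.inl rfl

theorem AllCls.symm {a b : KTr} (h : AllCls a b) : AllCls b a :=
  ⟨h.1.symm, h.2.2, h.2.1⟩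

theorem CRel.symm {a b : KTr} (h : CRel a b) : CRel b a := by
  rcases h with h | h
  · exact Or.inl h.symm
  · exact Or.inr h.symm

theorem CRel.trans {a b c : KTr} (h1 : CRel a b) (h2 : CRel b c) : CRel a c := by
  rcases h1 with h1 | h1
  · subst h1; exact h2
  · rcases h2 with h2 | h2
    · subst h2; exact Or.inr h1
    · exact Or.inr ⟨h1.1.trans h2.1, h1.2.1, h2.2.2⟩

/-- Transport step: transporting a backward transition through a coinitial
backward step with independent label puts everything in one event class. -/
theorem ts {X Y X1 W : Proc} {θ θs : PLab} (hv : Fwd Y θ X) (hs : Fwd X1 θs X)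
    (hv1 : Fwd W θ X1) (hs' : Fwd W θs Y) (hI : Ind θ θs) :
    AllCls (mkB X θ Y) (mkB X1 θ W) := by
  have sq1 : KSquare (mkB X θ Y) (mkB X θs X1) (mkB Y θs W) (mkB X1 θ W) :=
    ⟨mkB_valid hv, mkB_valid hs, mkB_valid hs', mkB_valid hv1,
      rfl, rfl, rfl, rfl, rfl, rfl, rfl, rfl, rfl, rfl⟩
  have ind1 : (mkB X θ Y).ind (mkB X θs X1) :=
    ⟨mkB_valid hv, mkB_valid hs,
      Or.inl (Reach.single (show Step X false θs X1 from hs.to_bwd)),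
      θ, θs, rfl, rfl, hv.to_bwd, rfl, rfl, hs.to_bwd, hI⟩
  have e1 := KEvEq.sq sq1 ind1
  have e2 := KEvEq.sqrev sq1 ind1
  have sq2 : KSquare (mkB X1 θ W) (mkF X1 θs X) (mkF W θs Y) (mkB X θ Y) :=
    ⟨mkB_valid hv1, mkF_valid hs, mkF_valid hs', mkB_valid hv,
      rfl, rfl, rfl, rfl, rfl, rfl, rfl, rfl, rfl, rfl⟩
  have ind2 : (mkB X1 θ W).ind (mkF X1 θs X) :=
    ⟨mkB_valid hv1, mkF_valid hs,
      Or.inl (Reach.single (show Step X1 true θs X from hs)),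
      θ, θs, rfl, rfl, hv1.to_bwd, rfl, rfl, hs, hI⟩
  have e3 := KEvEq.sqrev sq2 ind2
  exact ⟨e1, e1.trans e2.symm, (e3.trans e1).symm⟩

end CCSKP
namespace CCSKP

/-- Backward chains avoiding key k (each step `X → X1` is backward). -/
inductive BC (k : Key) : Proc → Proc → Prop where
  | nil (X : Proc) : BC k X X
  | cons {X X1 Z : Proc} {θ : PLab} : Fwd X1 θ X → θ.key ≠ k → BC k X1 Z → BC k X Z

/-- Forward chains avoiding key k. -/
inductive FC (k : Key) : Proc → Proc → Prop where
  | nil (X : Proc) : FC k X X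
  | cons {X X1 Z : Proc} {θ : PLab} : Fwd X θ X1 → θ.key ≠ k → FC k X1 Z → FC k X Z

theorem push {k : Key} {θs : PLab} {X1 M : Proc} (hb : BC k X1 M) :
    ∀ {X : Proc}, Fwd X θs X1 → θs.key ≠ k →
      BC k X M ∨ ∃ M2, BC k X M2 ∧ Fwd M2 θs M := by
  induction hb with
  | nil _ => intro X hs _; exact Or.inr ⟨X, .nil X, hs⟩
  | @cons _ X2 _ θb hbs hbk rest ih =>
      intro X hs hk
      by_cases he : θb.key = θs.key
      · obtain ⟨hθ, hY⟩ := cofinal_det hbs hs he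
        subst hθ; subst hY
        exact Or.inl rest
      · obtain ⟨W, hwa, hwb, _⟩ := bti hbs hs he
        rcases ih hwa hk with h | ⟨M2, hbc, hf⟩
        · exact Or.inl (.cons hwb hbk h)
        · exact Or.inr ⟨M2, .cons hwb hbk hbc, hf⟩

theorem parabola {k : Key} {X Z : Proc} (r : Path X Z)
    (hav : ∀ u : Tr, Path.Mem u r → u.key ≠ k) : ∃ M, BC k X M ∧ FC k M Z := by
  induction r with
  | nil _ => exact ⟨_, .nil _, .nil _⟩
  | cons t hv hs ht r ih =>
      obtain ⟨M, hbc, hfc⟩ := ih (fun u hu => hav u (Or.inr hu))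
      have hkey : t.lbl.key ≠ k := hav t (Or.inl rfl)
      have hv' : Step t.src t.fwd? t.lbl t.tgt := hv
      rcases hf : t.fwd? with _ | _
      · rw [hf] at hv'
        have hb : Fwd t.tgt t.lbl t.src := (show Bwd t.src t.lbl t.tgt from hv').to_fwd
        rw [hs] at hb; rw [ht] at hb
        exact ⟨M, .cons hb hkey hbc, hfc⟩
      · rw [hf] at hv'
        have hx : Fwd t.src t.lbl t.tgt := hv'
        rw [hs] at hx; rw [ht] at hx
        rcases push hbc hx hkey with h | ⟨M2, hbc2, hfwd⟩
        · exact ⟨M, h, hfc⟩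
        · exact ⟨M2, hbc2, .cons hfwd hkey hfc⟩

theorem transportB {k : Key} {X M : Proc} (hb : BC k X M) :
    ∀ {θ : PLab} {Y : Proc}, Fwd Y θ X → θ.key = k →
      ∃ W, Fwd W θ M ∧ CRel (mkB X θ Y) (mkB M θ W) := by
  induction hb with
  | nil _ => intro θ Y hv _; exact ⟨Y, hv, CRel.refl _⟩
  | cons hbs hbk rest ih =>
      intro θ Y hv hk
      obtain ⟨W, hwa, hwb, hI⟩ := bti hv hbs (fun e => hbk (e.symm.trans hk))
      have hall := ts hv hbs hwb hwa hI
      obtain ⟨W', hw', hc⟩ := ih hwb hk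
      exact ⟨W', hw', CRel.trans (Or.inr hall) hc⟩

theorem transportF {k : Key} {M Z : Proc} (hf : FC k M Z) :
    ∀ {θ : PLab} {Y : Proc}, Fwd Y θ Z → θ.key = k →
      ∃ W, Fwd W θ M ∧ CRel (mkB Z θ Y) (mkB M θ W) := by
  induction hf with
  | nil _ => intro θ Y hv _; exact ⟨Y, hv, CRel.refl _⟩
  | cons hfs hfk rest ih =>
      intro θ Y hv hk
      obtain ⟨W1, hw1, hc1⟩ := ih hv hk
      obtain ⟨W, hwa, hwb, hI⟩ := bti hw1 hfs (fun e => hfk (e.symm.trans hk))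
      have hall := ts hw1 hfs hwb hwa hI
      exact ⟨W, hwb, CRel.trans hc1 (Or.inr hall)⟩

theorem keytrans {X1 X2 Y1 Y2 : Proc} {θ1 θ2 : PLab} (h1 : Fwd Y1 θ1 X1)
    (h2 : Fwd Y2 θ2 X2) (hk : θ1.key = θ2.key) (r : Path X1 X2)
    (hav : ∀ u : Tr, Path.Mem u r → u.key ≠ θ1.key) :
    CRel (mkB X1 θ1 Y1) (mkB X2 θ2 Y2) := by
  obtain ⟨M, hbc, hfc⟩ := parabola r hav
  obtain ⟨W, hw, hc⟩ := transportB hbc h1 rfl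
  obtain ⟨W', hw', hc'⟩ := transportF hfc h2 hk.symm
  obtain ⟨hθ, hW⟩ := cofinal_det hw hw' hk
  subst hθ; subst hW
  exact CRel.trans hc (CRel.symm hc')

end CCSKP
namespace CCSKP

def Path.app : ∀ {X Y Z : Proc}, Path X Y → Path Y Z → Path X Z
  | _, _, _, .nil _, q => q
  | _, _, _, .cons t hv hs ht r, q => .cons t hv hs ht (r.app q)

theorem Path.mem_app {u : Tr} : ∀ {X Y Z : Proc} (p : Path X Y) (q : Path Y Z),
    Path.Mem u (p.app q) ↔ Path.Mem u p ∨ Path.Mem u q := by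
  intro X Y Z p q
  induction p with
  | nil _ => simp [Path.app, Path.Mem]
  | cons t hv hs ht r ih => simp [Path.app, Path.Mem, ih, or_assoc]

theorem path_rev {X Y : Proc} (p : Path X Y) {k : Key}
    (hav : ∀ u : Tr, Path.Mem u p → u.key ≠ k) :
    ∃ q : Path Y X, ∀ u : Tr, Path.Mem u q → u.key ≠ k := by
  induction p with
  | nil _ => exact ⟨.nil _, fun u h => h.elim⟩
  | cons t hv hs ht r ih =>
      obtain ⟨q, hq⟩ := ih (fun u hu => hav u (Or.inr hu))
      refine ⟨q.app (.cons t.rev (step_rev hv) ht hs (.nil _)), fun u hu => ?_⟩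
      rcases (Path.mem_app _ _).1 hu with h | h
      · exact hq u h
      · rcases h with h | h
        · subst h; exact hav t (Or.inl rfl)
        · exact h.elim

theorem kkeyeq_refl (t : KTr) : KKeyEq t t := ⟨rfl, .nil _, fun _ h => h.elim⟩

theorem kkeyeq_symm {a b : KTr} (h : KKeyEq a b) : KKeyEq b a := by
  obtain ⟨hk, r, hav⟩ := h
  obtain ⟨q, hq⟩ := path_rev r hav
  exact ⟨hk.symm, q, fun u hu => by rw [← hk]; exact hq u hu⟩

theorem kkeyeq_trans {a b c : KTr} (h1 : KKeyEq a b) (h2 : KKeyEq b c) : KKeyEq a c := by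
  obtain ⟨hk1, r1, hav1⟩ := h1
  obtain ⟨hk2, r2, hav2⟩ := h2
  refine ⟨hk1.trans hk2, r1.app r2, fun u hu => ?_⟩
  rcases (Path.mem_app _ _).1 hu with h | h
  · exact hav1 u h
  · rw [hk1]; exact hav2 u h

theorem fwdOf_eq_pos {a : KTr} (h : a.fwd? = true) : a.fwdOf = a := by
  simp [KTr.fwdOf, h]

theorem fwdOf_eq_neg {a : KTr} (h : a.fwd? = false) : a.fwdOf = a.rev := by
  simp [KTr.fwdOf, h]

/-- The square relation implies key equivalence of the two parallel sides. -/
theorem sq_keyeq {t u u' t' : KTr} (h : KSquare t u u' t') (hi : t.ind u) :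
    KKeyEqF t.fwdOf t'.fwdOf := by
  obtain ⟨hvt, hvu, hvu', hvt', hsrc, hu's, ht's, htt, hua, huk, huf, hta, htk, htf⟩ := h
  obtain ⟨_, _, _, θ1, θ2, hl1, hk1, hs1, hl2, hk2, hs2, hI⟩ := hi
  have hkn : t.key ≠ u.key := by
    rw [← hk1, ← hk2]
    exact keys_ne hI (by cases ht : t.fwd? <;> rw [ht] at hs1 <;>
        first
          | exact (show Bwd _ _ _ from hs1).to_fwd.synOK
          | exact (show Fwd _ _ _ from hs1).synOK)
      (by cases hu : u.fwd? <;> rw [hu] at hs2 <;>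
        first
          | exact (show Bwd _ _ _ from hs2).to_fwd.synOK
          | exact (show Fwd _ _ _ from hs2).synOK)
  rcases hft : t.fwd? with _ | _
  · -- backward
    rw [fwdOf_eq_neg hft, fwdOf_eq_neg (htf.trans hft)]
    refine ⟨by simp [KTr.rev, htk], ?_⟩
    · -- Path t.src → t'.src = u.tgt, via u itself
      obtain ⟨θu, hlu, hku, hstep⟩ := kstep_iff.1 hvu
      refine ⟨Path.cons ⟨u.src, u.fwd?, θu, u.tgt⟩ hstep hsrc.symm ht's.symm (.nil _),
        fun v hv => ?_⟩
      rcases hv with hv | hv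
      · subst hv
        show θu.key ≠ _
        simp only [KTr.rev]
        rw [hku]
        exact hkn.symm
      · exact hv.elim
  · rw [fwdOf_eq_pos hft, fwdOf_eq_pos (htf.trans hft)]
    refine ⟨htk.symm, ?_⟩
    obtain ⟨θu, hlu, hku, hstep⟩ := kstep_iff.1 hvu'
    refine ⟨Path.cons ⟨u'.src, u'.fwd?, θu, u'.tgt⟩ hstep hu's htt (.nil _),
      fun v hv => ?_⟩
    rcases hv with hv | hv
    · subst hv
      show θu.key ≠ _
      rw [hku, huk]
      exact hkn.symm
    · exact hv.elim

theorem evq_keyeq {a b : KTr} (h : KEvEq a b) : KKeyEq a b := by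
  induction h with
  | refl t => exact kkeyeq_refl t
  | symm _ ih => exact kkeyeq_symm ih
  | trans _ _ ih1 ih2 => exact kkeyeq_trans ih1 ih2
  | sq hsq hi => exact sq_keyeq hsq hi
  | sqrev hsq hi =>
      show KKeyEqF _ _
      rw [fwdOf_rev]
      exact sq_keyeq hsq hi

end CCSKP
namespace CCSKP

theorem step_synOK {X Y : Proc} {d : Bool} {θ : PLab} (h : Step X d θ Y) : θ.SynOK := by
  cases d
  · exact (show Bwd X θ Y from h).to_fwd.synOK
  · exact (show Fwd X θ Y from h).synOK

theorem sp {X Y Z : Proc} {d1 d2 : Bool} {θ1 θ2 : PLab} (h1 : Step X d1 θ1 Y)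
    (h2 : Step X d2 θ2 Z) (hI : Ind θ1 θ2) (hsyn1 : θ1.SynOK) (hsyn2 : θ2.SynOK) :
    ∃ W, Step Y d2 θ2 W ∧ Step Z d1 θ1 W := by
  cases d1 with
  | false =>
      cases d2 with
      | false =>
          have f1 : Fwd Y θ1 X := (show Bwd X θ1 Y from h1).to_fwd
          have f2 : Fwd Z θ2 X := (show Bwd X θ2 Z from h2).to_fwd
          obtain ⟨W, hwa, hwb, _⟩ := bti f1 f2 (keys_ne hI hsyn1 hsyn2)
          exact ⟨W, show Step Y false θ2 W from hwa.to_bwd,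
            show Step Z false θ1 W from hwb.to_bwd⟩
      | true =>
          have f1 : Fwd Y θ1 X := (show Bwd X θ1 Y from h1).to_fwd
          obtain ⟨W, hwa, hwb⟩ := sp_fb (show Fwd X θ2 Z from h2) hI.symm f1
          exact ⟨W, show Step Y true θ2 W from hwb,
            show Step Z false θ1 W from hwa.to_bwd⟩
  | true =>
      cases d2 with
      | false =>
          have f2 : Fwd Z θ2 X := (show Bwd X θ2 Z from h2).to_fwd
          obtain ⟨W, hwa, hwb⟩ := sp_fb (show Fwd X θ1 Y from h1) hI f2
          exact ⟨W, show Step Y false θ2 W from hwa.to_bwd,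
            show Step Z true θ1 W from hwb⟩
      | true =>
          obtain ⟨W, hwa, hwb⟩ :=
            sp_ff (show Fwd X θ1 Y from h1) hI (show Fwd X θ2 Z from h2)
          exact ⟨W, hwa, hwb⟩

theorem kind_symm {a b : KTr} (h : a.ind b) : b.ind a := by
  obtain ⟨hva, hvb, hc, θ1, θ2, l1, k1, s1, l2, k2, s2, hI⟩ := h
  exact ⟨hvb, hva, hc.symm, θ2, θ1, l2, k2, s2, l1, k1, s1, hI.symm⟩

theorem dki_symm {a b : KTr} (h : a.DKI b) : b.DKI a := by
  obtain ⟨hva, hvb, hsrc, hkne, S, hq1, hq2⟩ := h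
  exact ⟨hvb, hva, hsrc.symm, hkne.symm, S, hq2, hq1⟩

theorem dki_ind {t' u' : KTr} (h : t'.DKI u') : t'.ind u' := by
  obtain ⟨hvt, hvu, hsrc, hkne, S, hq1, hq2⟩ := h
  obtain ⟨θ1, hl1, hk1, hs1⟩ := kstep_iff.1 hvt
  obtain ⟨θ2, hl2, hk2, hs2⟩ := kstep_iff.1 hvu
  obtain ⟨θq2, hlq2, hkq2, hsq2⟩ := kstep_iff.1 hq1
  obtain ⟨θq1, hlq1, hkq1, hsq1⟩ := kstep_iff.1 hq2
  have hconn : t'.Connected u' := Or.inl (by rw [hsrc]; exact Reach.single hs2)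
  refine ⟨hvt, hvu, hconn, θ1, θ2, hl1, hk1, hs1, hl2, hk2, hs2, ?_⟩
  rw [← hsrc] at hs2
  rcases hdt : t'.fwd? with _ | _ <;> rcases hdu : u'.fwd? with _ | _ <;>
    rw [hdt] at hs1 hsq1 <;> rw [hdu] at hs2 hsq2
  · -- both backward
    have f1 : Fwd t'.tgt θ1 t'.src := (show Bwd _ _ _ from hs1).to_fwd
    have f2 : Fwd u'.tgt θ2 t'.src := (show Bwd _ _ _ from hs2).to_fwd
    obtain ⟨W, _, _, hI⟩ := bti f1 f2 (by rw [hk1, hk2]; exact hkne)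
    exact hI
  · -- t' backward, u' forward
    have f1 : Fwd t'.tgt θ1 t'.src := (show Bwd _ _ _ from hs1).to_fwd
    have f2 : Fwd t'.src θ2 u'.tgt := hs2
    have fq1 : Fwd S θq1 u'.tgt := (show Bwd _ _ _ from hsq1).to_fwd
    obtain ⟨W, _, hw2, hI0⟩ := bti fq1 f2
      (by rw [hkq1, hk2]; exact hkne)
    obtain ⟨hθ, _⟩ := cofinal_det hw2 f1 (by rw [hkq1, hk1])
    exact hθ ▸ hI0
  · -- t' forward, u' backward
    have f2 : Fwd u'.tgt θ2 t'.src := (show Bwd _ _ _ from hs2).to_fwd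
    have fq2 : Fwd S θq2 t'.tgt := (show Bwd _ _ _ from hsq2).to_fwd
    obtain ⟨W, _, hw2, hI0⟩ := bti fq2 (show Fwd t'.src θ1 t'.tgt from hs1)
      (by rw [hkq2, hk1]; exact hkne.symm)
    obtain ⟨hθ, _⟩ := cofinal_det hw2 f2 (by rw [hkq2, hk2])
    have : Ind θ2 θ1 := hθ ▸ hI0
    exact this.symm
  · -- both forward
    have f1 : Fwd t'.src θ1 t'.tgt := hs1
    have f2 : Fwd t'.src θ2 u'.tgt := hs2
    have fq2 : Fwd t'.tgt θq2 S := hsq2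
    have fq1 : Fwd u'.tgt θq1 S := hsq1
    obtain ⟨W, hwa, hwb, hI0⟩ := bti fq2 fq1 (by rw [hkq2, hkq1]; exact hkne.symm)
    obtain ⟨e1, eW⟩ := cofinal_det hwa f1 (by rw [hkq1, hk1])
    obtain ⟨e2, _⟩ := cofinal_det hwb f2 (by rw [hkq2, hk2])
    have : Ind θq2 θq1 := hI0
    rw [e1, e2] at this
    exact this.symm

theorem dki_selfrev {a b : KTr} (h : a.DKI b) (hi : a.ind b) : KEvEq a a.rev := by
  obtain ⟨hva, hvb, hsrc, hkne, S, hq1, hq2⟩ := h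
  have hsq : KSquare a b ⟨a.tgt, b.fwd?, b.act, b.key, S⟩ ⟨b.tgt, a.fwd?, a.act, a.key, S⟩ :=
    ⟨hva, hvb, hq1, hq2, hsrc, rfl, rfl, rfl, rfl, rfl, rfl, rfl, rfl, rfl⟩
  exact (KEvEq.sq hsq hi).trans (KEvEq.sqrev hsq hi).symm

theorem keyeq_evq {a b : KTr} (hva : a.Valid) (hvb : b.Valid) (hkeq : KKeyEq a b)
    (hrevb : KEvEq b b.rev) : KEvEq b a := by
  obtain ⟨hk, r, hav⟩ := hkeq
  obtain ⟨θ1, hl1, hk1, hs1⟩ := kstep_iff.1 (fwdOf_valid hva)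
  obtain ⟨θ2, hl2, hk2, hs2⟩ := kstep_iff.1 (fwdOf_valid hvb)
  rw [fwdOf_fwd] at hs1 hs2
  have h1 : Fwd a.fwdOf.src θ1 a.fwdOf.tgt := hs1
  have h2 : Fwd b.fwdOf.src θ2 b.fwdOf.tgt := hs2
  have hcr := keytrans h1 h2 (by rw [hk1, hk2]; exact hk) r
      (fun u hu => by rw [hk1]; exact hav u hu)
  have e1 : mkB a.fwdOf.tgt θ1 a.fwdOf.src = a.fwdOf.rev := by
    simp [mkB, KTr.rev, hl1, hk1, fwdOf_fwd]
  have e2 : mkB b.fwdOf.tgt θ2 b.fwdOf.src = b.fwdOf.rev := by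
    simp [mkB, KTr.rev, hl2, hk2, fwdOf_fwd]
  rw [e1, e2] at hcr
  rcases hcr with heq | ⟨hab, haa, hbb⟩
  · have heq2 : a.fwdOf = b.fwdOf := by
      have := congrArg KTr.rev heq; rwa [KTr.rev_rev, KTr.rev_rev] at this
    rcases hfa : a.fwd? with _ | _ <;> rcases hfb : b.fwd? with _ | _
    · rw [fwdOf_eq_neg hfa, fwdOf_eq_neg hfb] at heq2
      have hab2 : a = b := by
        have := congrArg KTr.rev heq2; rwa [KTr.rev_rev, KTr.rev_rev] at this
      rw [hab2]; exact .refl b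
    · rw [fwdOf_eq_neg hfa, fwdOf_eq_pos hfb] at heq2
      have : a = b.rev := by rw [← heq2, KTr.rev_rev]
      rw [this]; exact hrevb
    · rw [fwdOf_eq_pos hfa, fwdOf_eq_neg hfb] at heq2
      rw [heq2]; exact hrevb
    · rw [fwdOf_eq_pos hfa, fwdOf_eq_pos hfb] at heq2
      rw [heq2]; exact .refl b
  · rw [KTr.rev_rev] at haa hbb
    have hA : KEvEq a.fwdOf.rev a := by
      rcases hfa : a.fwd? with _ | _
      · rw [fwdOf_eq_neg hfa, KTr.rev_rev]; exact .refl a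
      · rw [fwdOf_eq_pos hfa] at haa ⊢; exact haa
    have hB : KEvEq b.fwdOf.rev b := by
      rcases hfb : b.fwd? with _ | _
      · rw [fwdOf_eq_neg hfb, KTr.rev_rev]; exact .refl b
      · rw [fwdOf_eq_pos hfb] at hbb ⊢; exact hbb
    exact hB.symm.trans (hab.symm.trans hA)

theorem reach_fwdOf_tgt {a : KTr} (hv : a.Valid) :
    Reach a.src a.fwdOf.tgt ∧ Reach a.fwdOf.tgt a.tgt := by
  obtain ⟨θ, _, _, hs⟩ := kstep_iff.1 hv
  have r : Reach a.src a.tgt := Reach.single hs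
  rcases hf : a.fwd? with _ | _
  · rw [fwdOf_eq_neg hf]
    exact ⟨.refl _, r⟩
  · rw [fwdOf_eq_pos hf]
    exact ⟨r, .refl _⟩

end CCSKP

namespace CCSKP

/-- **Independences coincide.** For CCSK transitions (over reachable processes),
key independence coincides with core independence. -/
theorem independences_coincide (t u : KTr)
    (ht : t.Valid) (hu : u.Valid)
    (hr1 : Reachable t.src) (hr2 : Reachable u.src) :
    KKeyInd t u ↔ KCoreInd t u := by
  constructor
  · rintro ⟨hconn, t', u', hkt, hku, hdki⟩
    have hind := dki_ind hdki
    have hselfT : KEvEq t' t'.rev := dki_selfrev hdki hind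
    have hselfU : KEvEq u' u'.rev := dki_selfrev (dki_symm hdki) (kind_symm hind)
    exact ⟨t', u', keyeq_evq ht hdki.1 hkt hselfT, keyeq_evq hu hdki.2.1 hku hselfU,
      hdki.2.2.1, hind⟩
  · rintro ⟨t0, u0, he1, he2, hsrc0, hind0⟩
    obtain ⟨hv1, hv2, hconn0, θ1, θ2, hl1, hkk1, hs1, hl2, hkk2, hs2, hI⟩ := hind0
    have hsyn1 := step_synOK hs1
    have hsyn2 := step_synOK hs2
    have hkne : t0.key ≠ u0.key := by rw [← hkk1, ← hkk2]; exact keys_ne hI hsyn1 hsyn2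
    have hs2' : Step t0.src u0.fwd? θ2 u0.tgt := by rw [hsrc0]; exact hs2
    obtain ⟨S, hq2s, hq1s⟩ := sp hs1 hs2' hI hsyn1 hsyn2
    have hdki : t0.DKI u0 := ⟨hv1, hv2, hsrc0, hkne, S,
      kstep_iff.2 ⟨θ2, hl2, hkk2, hq2s⟩, kstep_iff.2 ⟨θ1, hl1, hkk1, hq1s⟩⟩
    refine ⟨?_, t0, u0, kkeyeq_symm (evq_keyeq he1), kkeyeq_symm (evq_keyeq he2), hdki⟩
    left
    obtain ⟨hkt0, rt, _⟩ := evq_keyeq he1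
    obtain ⟨hku0, ru, _⟩ := evq_keyeq he2
    have p1 := reach_fwdOf_tgt ht
    have p2 := reach_fwdOf_tgt hu
    have p3 := reach_fwdOf_tgt hv1
    have p4 := reach_fwdOf_tgt hv2
    have rt' : Reach t0.fwdOf.tgt t.fwdOf.tgt := reach_of_path rt
    have ru' : Reach u0.fwdOf.tgt u.fwdOf.tgt := reach_of_path ru
    have c1 : Reach t.src t0.src := (p1.1.trans' rt'.symm').trans' p3.1.symm'
    have c2 : Reach t0.src u0.tgt := by
      rcases hconn0 with h | h
      · exact h
      · have rtt : Reach t0.src t0.tgt := p3.1.trans' p3.2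
        have ruu : Reach u0.src u0.tgt := p4.1.trans' p4.2
        exact (rtt.trans' h.symm').trans' ruu
    have c3 : Reach u0.tgt u.tgt := (p4.2.symm'.trans' ru').trans' p2.2
    exact (c1.trans' c2).trans' c3

end CCSKP
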